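/- arXiv:2111.09588 — 7 statements merged into one kernel-verified Lean document; each statement's English description precedes it below -/
import Mathlib

section
/- Let P be a finite connected poset with at least two points, Q a finite poset of height one (flat), and f : E(P) → Q an order homomorphism on the subposet of extremal points of P. For x ∈ P define α(x) = f[L(P) ∩ ↓x] and β(x) = f[U(P) ∩ ↑x]. If for all x with α(x) ∩ β(x) = ∅ one has (|α(x)| ≥ 2 ⟹ |β(x)| = 1) and (|β(x)| ≥ 2 ⟹ |α(x)| = 1), then there exists an order homomorphism g : P → Q extending f, i.e., with g restricted to E(P) equal to f. -/
/-- The poset is connected: any two points are joined by a walk in the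
comparability graph (equivalently, in a finite poset, by a fence). -/
def ConnectedPoset (α : Type*) [PartialOrder α] : Prop :=
  ∀ a b : α, Relation.ReflTransGen (fun u v : α => u ≤ v ∨ v ≤ u) a b

/-- A poset is flat iff it has height one: every point is extremal and there
is at least one strict comparability. -/
def IsFlatPoset (β : Type*) [PartialOrder β] : Prop :=
  (∀ z : β, IsMin z ∨ IsMax z) ∧ ∃ u v : β, u < v

/-- The set of extremal points of a poset. -/
def EP (α : Type*) [PartialOrder α] : Set α := {z | IsMin z ∨ IsMax z}

/-!
The candidate values at `x` are `downImage f x = f[L(P) ∩ ↓x]` and `upImage f x = f[U(P) ∩ ↑x]`: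
both are nonempty, the first grows and the second shrinks with `x`, and for `x ≤ y` every
element of `downImage f x` lies below every element of `upImage f y`. Take `g x` in their
intersection when it is nonempty; otherwise take it from `upImage f x` when `x` is maximal
or `downImage f x` has at least two elements (the hypothesis then makes `upImage f x` a
singleton), and from `downImage f x` in the remaining case, where that set is a singleton.
The condition selecting `upImage` is upward closed, so for `x ≤ y` comparing `g x` with `g y`
always reduces either to the separation above or to the inclusion of a set in a singleton.
-/

section ExtremalExtension

variable {α β : Type*} [PartialOrder α]

def downImage (f : EP α → β) (x : α) : Set β :=
  f '' {e : EP α | IsMin (e : α) ∧ (e : α) ≤ x}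

def upImage (f : EP α → β) (x : α) : Set β :=
  f '' {e : EP α | IsMax (e : α) ∧ x ≤ (e : α)}

variable (f : EP α → β)

lemma downImage_nonempty [Finite α] (x : α) : (downImage f x).Nonempty := by
  obtain ⟨m, hmx, hm⟩ := exists_minimal_le_of_wellFoundedLT (fun _ : α => True) x trivial
  have hm : IsMin m := minimal_true.mp hm
  exact ⟨_, ⟨m, .inl hm⟩, ⟨hm, hmx⟩, rfl⟩

lemma downImage_mono : Monotone (downImage f) :=
  fun _ _ hxy => Set.image_mono fun _ he => ⟨he.1, he.2.trans hxy⟩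

lemma upImage_anti : Antitone (upImage f) :=
  fun _ _ hxy => Set.image_mono fun _ he => ⟨he.1, hxy.trans he.2⟩

lemma downImage_eq_singleton {e : EP α} (he : IsMin (e : α)) : downImage f e = {f e} := by
  refine Set.eq_singleton_iff_unique_mem.mpr ⟨⟨e, ⟨he, le_rfl⟩, rfl⟩, ?_⟩
  rintro _ ⟨d, ⟨-, hde⟩, rfl⟩
  rw [Subtype.ext (he.eq_of_le hde)]

lemma upImage_eq_singleton {e : EP α} (he : IsMax (e : α)) : upImage f e = {f e} := by
  refine Set.eq_singleton_iff_unique_mem.mpr ⟨⟨e, ⟨he, le_rfl⟩, rfl⟩, ?_⟩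
  rintro _ ⟨d, ⟨-, hed⟩, rfl⟩
  rw [Subtype.ext (he.eq_of_ge hed)]

def TakesUpperValue (x : α) : Prop :=
  IsMax x ∨ (downImage f x).Nontrivial

variable {f} in
lemma TakesUpperValue.mono {x y : α} (hxy : x ≤ y) (hx : TakesUpperValue f x) :
    TakesUpperValue f y := by
  rcases hx with hmax | hnt
  · exact .inl (hmax.mono hxy)
  · exact .inr (hnt.mono (downImage_mono f hxy))

def IsAdmissibleValue (x : α) (b : β) : Prop :=
  (b ∈ downImage f x ∧ b ∈ upImage f x) ∨
    (TakesUpperValue f x ∧ upImage f x = {b}) ∨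
    (¬ TakesUpperValue f x ∧ downImage f x = {b})

variable {f}

lemma exists_isAdmissibleValue [Finite α]
    (hcond : ∀ x, downImage f x ∩ upImage f x = ∅ →
      2 ≤ (downImage f x).ncard → (upImage f x).ncard = 1)
    (x : α) : ∃ b, IsAdmissibleValue f x b := by
  by_cases hmeet : (downImage f x ∩ upImage f x).Nonempty
  · obtain ⟨b, hb⟩ := hmeet
    exact ⟨b, .inl hb⟩
  by_cases hup : TakesUpperValue f x
  · suffices ∃ b, upImage f x = {b} from this.imp fun _ hb => .inr (.inl ⟨hup, hb⟩)
    rcases hup with hmax | hnt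
    · exact ⟨_, upImage_eq_singleton f (e := ⟨x, .inr hmax⟩) hmax⟩
    · have hfin : (downImage f x).Finite := (Set.toFinite _).image f
      refine Set.ncard_eq_one.mp (hcond x (Set.not_nonempty_iff_eq_empty.mp hmeet) ?_)
      exact Set.one_lt_ncard_iff_nontrivial_and_finite.mpr ⟨hnt, hfin⟩
  · have hsub : (downImage f x).Subsingleton := Set.not_nontrivial_iff.mp fun h => hup (.inr h)
    obtain ⟨b, hb⟩ :=
      Set.exists_eq_singleton_iff_nonempty_subsingleton.mpr ⟨downImage_nonempty f x, hsub⟩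
    exact ⟨b, .inr (.inr ⟨hup, hb⟩)⟩

lemma IsAdmissibleValue.eq_apply {e : EP α} {b : β} (hb : IsAdmissibleValue f e b) :
    b = f e := by
  rcases e.2 with hmin | hmax
  · have hdown := downImage_eq_singleton f hmin
    rcases hb with ⟨hb, -⟩ | ⟨hmax | hnt, hb⟩ | ⟨-, hb⟩
    · exact Set.eq_of_mem_singleton (hdown ▸ hb)
    · exact Set.singleton_eq_singleton_iff.mp (hb.symm.trans (upImage_eq_singleton f hmax))
    · exact absurd (hdown ▸ hnt) Set.not_nontrivial_singleton
    · exact Set.singleton_eq_singleton_iff.mp (hb.symm.trans hdown)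
  · have hup := upImage_eq_singleton f hmax
    rcases hb with ⟨-, hb⟩ | ⟨-, hb⟩ | ⟨hnot, -⟩
    · exact Set.eq_of_mem_singleton (hup ▸ hb)
    · exact Set.singleton_eq_singleton_iff.mp (hb.symm.trans hup)
    · exact absurd (.inl hmax) hnot

variable [Preorder β]

lemma le_of_mem_downImage_of_mem_upImage (hf : Monotone f) {x y : α} (hxy : x ≤ y) {a b : β}
    (ha : a ∈ downImage f x) (hb : b ∈ upImage f y) : a ≤ b := by
  obtain ⟨l, ⟨-, hlx⟩, rfl⟩ := ha
  obtain ⟨u, ⟨-, hyu⟩, rfl⟩ := hb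
  exact hf ((hlx.trans hxy).trans hyu)

lemma monotone_of_isAdmissibleValue (hf : Monotone f) {g : α → β}
    (hg : ∀ x, IsAdmissibleValue f x (g x)) : Monotone g := by
  intro x y hxy
  have hsep {a b : β} : a ∈ downImage f x → b ∈ upImage f y → a ≤ b :=
    le_of_mem_downImage_of_mem_upImage hf hxy
  rcases hg x with ⟨hx, -⟩ | ⟨hupx, hx⟩ | ⟨-, hx⟩ <;>
    rcases hg y with ⟨-, hy⟩ | ⟨-, hy⟩ | ⟨hupy, hy⟩
  · exact hsep hx hy
  · exact hsep hx (hy ▸ rfl)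
  · exact (Set.eq_of_mem_singleton (hy ▸ downImage_mono f hxy hx)).le
  · exact (Set.eq_of_mem_singleton (hx ▸ upImage_anti f hxy hy)).ge
  · exact (Set.eq_of_mem_singleton (hx ▸ upImage_anti f hxy (hy ▸ rfl))).ge
  · exact absurd (hupx.mono hxy) hupy
  · exact hsep (hx ▸ rfl) hy
  · exact hsep (hx ▸ rfl) (hy ▸ rfl)
  · exact (Set.eq_of_mem_singleton (hy ▸ downImage_mono f hxy (hx ▸ rfl))).le

end ExtremalExtension

theorem stmt4_general {α β : Type*} [PartialOrder α] [PartialOrder β] [Fintype α]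
    (f : EP α → β) (hf : Monotone f)
    (hcond : ∀ x : α,
      (f '' {e : EP α | IsMin (e : α) ∧ (e : α) ≤ x}) ∩
        (f '' {e : EP α | IsMax (e : α) ∧ x ≤ (e : α)}) = ∅ →
      (2 ≤ (f '' {e : EP α | IsMin (e : α) ∧ (e : α) ≤ x}).ncard →
        (f '' {e : EP α | IsMax (e : α) ∧ x ≤ (e : α)}).ncard = 1) ∧
      (2 ≤ (f '' {e : EP α | IsMax (e : α) ∧ x ≤ (e : α)}).ncard →
        (f '' {e : EP α | IsMin (e : α) ∧ (e : α) ≤ x}).ncard = 1)) :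
    ∃ g : α → β, Monotone g ∧ ∀ e : EP α, g (e : α) = f e := by
  choose g hg using exists_isAdmissibleValue (f := f) fun x hdisj => (hcond x hdisj).1
  exact ⟨g, monotone_of_isAdmissibleValue hf hg, fun e => (hg e).eq_apply⟩

/-- Proposition about extending homomorphisms from `E(P)` to `P`. -/
theorem stmt4 {α β : Type*} [PartialOrder α] [PartialOrder β] [Fintype α] [Fintype β]
    (hconn : ConnectedPoset α) (htwo : ∃ x y : α, x ≠ y)
    (hflat : IsFlatPoset β)
    (f : EP α → β) (hf : Monotone f)
    (hcond : ∀ x : α,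
      (f '' {e : EP α | IsMin (e : α) ∧ (e : α) ≤ x}) ∩
        (f '' {e : EP α | IsMax (e : α) ∧ x ≤ (e : α)}) = ∅ →
      (2 ≤ (f '' {e : EP α | IsMin (e : α) ∧ (e : α) ≤ x}).ncard →
        (f '' {e : EP α | IsMax (e : α) ∧ x ≤ (e : α)}).ncard = 1) ∧
      (2 ≤ (f '' {e : EP α | IsMax (e : α) ∧ x ≤ (e : α)}).ncard →
        (f '' {e : EP α | IsMin (e : α) ∧ (e : α) ≤ x}).ncard = 1)) :
    ∃ g : α → β, Monotone g ∧ ∀ e : EP α, g (e : α) = f e :=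
  stmt4_general f hf hcond
end

section
/- Let P be a finite connected poset with at least two points, Q a flat finite poset containing no 4-crown, and f : E(P) → Q an order homomorphism. Then there exists an order homomorphism g : P → Q with g restricted to E(P) equal to f. -/
/-- `{a,b,v,w}` is a 4-crown: exactly the strict comparabilities
`a<v, a<w, b<v, b<w` (so `a,b` and `v,w` are incomparable pairs). -/
def Is4Crown {β : Type*} [PartialOrder β] (a b v w : β) : Prop :=
  a < v ∧ a < w ∧ b < v ∧ b < w ∧ ¬ a ≤ b ∧ ¬ b ≤ a ∧ ¬ v ≤ w ∧ ¬ w ≤ v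

/-!
For `x ∈ P` let `D x` be the set of values of `f` at the minimal points below `x`; every value
of `f` at a maximal point above `x` bounds `D x` from above. Put `g x := max D x` when `D x` is a
chain, and `g x := f u` for some maximal `u ≥ x` otherwise. In a flat poset without 4-crowns an
incomparable pair has at most one common upper bound, so once `D x` is not a chain, `g` is
constant on the points above `x`; when it is a chain, `g x ∈ D x ⊆ D y ≤ g y` for `y ≥ x`.
-/

section Extension

variable {α β : Type*} [PartialOrder α]

def minValuesBelow (f : EP α → β) (x : α) : Set β :=
  f '' {e | IsMin (e : α) ∧ (e : α) ≤ x}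

theorem minValuesBelow_mono (f : EP α → β) : Monotone (minValuesBelow f) := by
  rintro x y hxy _ ⟨e, ⟨he, hex⟩, rfl⟩
  exact ⟨e, ⟨he, hex.trans hxy⟩, rfl⟩

theorem minValuesBelow_finite [Finite α] (f : EP α → β) (x : α) :
    (minValuesBelow f x).Finite :=
  (Set.toFinite _).image f

theorem upperBounds_subsingleton_of_not_isChain [PartialOrder β]
    (hβ : ∀ z : β, IsMin z ∨ IsMax z) (hcrown : ¬ ∃ a b v w : β, Is4Crown a b v w)
    {s : Set β} (hs : ¬ IsChain (· ≤ ·) s) :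
    (upperBounds s).Subsingleton := by
  obtain ⟨p, hp, q, hq, -, hpq⟩ : ∃ p ∈ s, ∃ q ∈ s, p ≠ q ∧ ¬ p ≤ q ∧ ¬ q ≤ p := by
    simpa [IsChain, Set.Pairwise] using hs
  have hlt : ∀ {u}, u ∈ upperBounds s → p < u ∧ q < u := fun hu =>
    ⟨(hu hp).lt_of_not_ge fun h => hpq.2 ((hu hq).trans h),
      (hu hq).lt_of_not_ge fun h => hpq.1 ((hu hp).trans h)⟩
  have hmax : ∀ {u}, u ∈ upperBounds s → IsMax u := fun hu =>
    (hβ _).resolve_left (hlt hu).1.not_isMin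
  intro v hv w hw
  by_contra hvw
  exact hcrown ⟨p, q, v, w, (hlt hv).1, (hlt hw).1, (hlt hv).2, (hlt hw).2, hpq.1, hpq.2,
    fun h => hvw ((hmax hv) h |>.antisymm' h), fun h => hvw ((hmax hw) h |>.antisymm h)⟩

theorem monotone_of_mem_upperBounds_minValuesBelow [PartialOrder β]
    (hβ : ∀ z : β, IsMin z ∨ IsMax z) (hcrown : ¬ ∃ a b v w : β, Is4Crown a b v w)
    {f : EP α → β} {g : α → β}
    (hub : ∀ x, g x ∈ upperBounds (minValuesBelow f x))
    (hmem : ∀ x, ¬ IsMax x →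
      g x ∈ minValuesBelow f x ∨ ¬ IsChain (· ≤ ·) (minValuesBelow f x)) :
    Monotone g := by
  intro x y hxy
  rcases hxy.eq_or_lt with rfl | hlt
  · exact le_rfl
  rcases hmem x hlt.not_isMax with hx | hx
  · exact hub y (minValuesBelow_mono f hxy hx)
  · exact (upperBounds_subsingleton_of_not_isChain hβ hcrown hx (hub x)
      (upperBounds_mono_set (minValuesBelow_mono f hxy) (hub y))).le

theorem exists_isGreatest_minValuesBelow [PartialOrder β] [Finite α] (f : EP α → β) {x : α}
    (hchain : IsChain (· ≤ ·) (minValuesBelow f x)) : ∃ m, IsGreatest (minValuesBelow f x) m := by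
  obtain ⟨d, hdx, hd⟩ := Finite.exists_le_minimal (p := fun _ : α => True) trivial (a := x)
  have hd : IsMin d := minimal_true.mp hd
  obtain ⟨m, hm⟩ := (minValuesBelow_finite f x).exists_maximal
    ⟨f ⟨d, Or.inl hd⟩, ⟨d, Or.inl hd⟩, ⟨hd, hdx⟩, rfl⟩
  refine ⟨m, hm.prop, fun p hp => ?_⟩
  rcases eq_or_ne p m with rfl | hpm
  · exact le_rfl
  exact (hchain hp hm.prop hpm).elim id (hm.le_of_ge hp)

theorem exists_extension_value [PartialOrder β] [Finite α] {f : EP α → β} (hf : Monotone f)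
    (x : α) :
    ∃ v : β, (∀ hx : x ∈ EP α, f ⟨x, hx⟩ = v) ∧ v ∈ upperBounds (minValuesBelow f x) ∧
      (¬ IsMax x → v ∈ minValuesBelow f x ∨ ¬ IsChain (· ≤ ·) (minValuesBelow f x)) := by
  have hub : ∀ e : EP α, x ≤ e → f e ∈ upperBounds (minValuesBelow f x) := by
    rintro e hxe _ ⟨d, ⟨-, hdx⟩, rfl⟩
    exact hf (hdx.trans hxe)
  by_cases hx : x ∈ EP α
  · refine ⟨f ⟨x, hx⟩, fun _ => rfl, hub ⟨x, hx⟩ le_rfl, fun hxmax => Or.inl ?_⟩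
    exact ⟨⟨x, hx⟩, ⟨hx.resolve_right hxmax, le_rfl⟩, rfl⟩
  by_cases hchain : IsChain (· ≤ ·) (minValuesBelow f x)
  · obtain ⟨m, hm, hmub⟩ := exists_isGreatest_minValuesBelow f hchain
    exact ⟨m, fun h => absurd h hx, hmub, fun _ => Or.inl hm⟩
  · obtain ⟨u, hxu, hu⟩ := Finite.exists_le_maximal (p := fun _ : α => True) trivial (a := x)
    have hu : u ∈ EP α := Or.inr (maximal_true.mp hu)
    exact ⟨f ⟨u, hu⟩, fun h => absurd h hx, hub ⟨u, hu⟩ hxu, fun _ => Or.inr hchain⟩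

end Extension

theorem stmt5_general {α β : Type*} [PartialOrder α] [PartialOrder β] [Fintype α]
    (hflat : IsFlatPoset β)
    (hnocrown : ¬ ∃ a b v w : β, Is4Crown a b v w)
    (f : EP α → β) (hf : Monotone f) :
    ∃ g : α → β, Monotone g ∧ ∀ e : EP α, g (e : α) = f e := by
  choose g hgf hub hmem using exists_extension_value hf
  exact ⟨g, monotone_of_mem_upperBounds_minValuesBelow hflat.1 hnocrown hub hmem,
    fun e => (hgf e e.2).symm⟩

/-- homomorphisms from `E(P)` to a flat poset without 4-crowns
extend to `P`. -/
theorem stmt5 {α β : Type*} [PartialOrder α] [PartialOrder β] [Fintype α] [Fintype β]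
    (hconn : ConnectedPoset α) (htwo : ∃ x y : α, x ≠ y)
    (hflat : IsFlatPoset β)
    (hnocrown : ¬ ∃ a b v w : β, Is4Crown a b v w)
    (f : EP α → β) (hf : Monotone f) :
    ∃ g : α → β, Monotone g ∧ ∀ e : EP α, g (e : α) = f e :=
  stmt5_general hflat hnocrown f hf
end

section
/- Let P be a finite connected poset with at least two points, and let C ⊆ E(P) be a crown with strictly more than four points. Then C is a retract of P if and only if C is a retract of E(P). -/
/-- Comparability of two (distinct) points. -/
def Comp {α : Type*} [PartialOrder α] (x y : α) : Prop := x ≠ y ∧ (x ≤ y ∨ y ≤ x)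

/-- `S` is a crown: it has at least 4 points and its comparability graph is a
cycle, i.e. it is 2-regular and connected. -/
def IsCrown {α : Type*} [PartialOrder α] (S : Set α) : Prop :=
  4 ≤ S.ncard ∧
  (∀ x ∈ S, {y | y ∈ S ∧ Comp x y}.ncard = 2) ∧
  ∀ x ∈ S, ∀ y ∈ S,
    Relation.ReflTransGen (fun u v : α => u ∈ S ∧ v ∈ S ∧ Comp u v) x y

/-- `C` is a retract of the whole poset. -/
def IsRetract {α : Type*} [PartialOrder α] (C : Set α) : Prop :=
  ∃ r : α → α, Monotone r ∧ (∀ z, r (r z) = r z) ∧ Set.range r = C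

/-- `C` is a retract of the induced subposet on `S`. -/
def IsRetractOfSub {α : Type*} [PartialOrder α] (S C : Set α) : Prop :=
  C ⊆ S ∧ ∃ r : S → S, Monotone r ∧ (∀ z, r (r z) = r z) ∧
    Subtype.val '' Set.range r = C

open Set

section Crown

variable {α : Type*} [PartialOrder α] {C : Set α}

lemma Comp.symm {x y : α} (h : Comp x y) : Comp y x := ⟨h.1.symm, h.2.symm⟩

lemma comp_of_lt {x y : α} (h : x < y) : Comp x y := ⟨h.ne, Or.inl h.le⟩

lemma IsCrown.eq_or_eq_of_comp (hC : IsCrown C) {x y₁ y₂ y : α} (hx : x ∈ C)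
    (hy₁ : y₁ ∈ C) (hy₂ : y₂ ∈ C) (hy : y ∈ C) (hne : y₁ ≠ y₂)
    (h₁ : Comp x y₁) (h₂ : Comp x y₂) (h : Comp x y) : y = y₁ ∨ y = y₂ := by
  have hdeg := hC.2.1 x hx
  have hpair : ({y₁, y₂} : Set α) = {y | y ∈ C ∧ Comp x y} := by
    refine eq_of_subset_of_ncard_le ?_ (by rw [hdeg, ncard_pair hne])
      (finite_of_ncard_ne_zero (by omega))
    rintro _ (rfl | rfl)
    exacts [⟨hy₁, h₁⟩, ⟨hy₂, h₂⟩]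
  have hy' : y ∈ {y | y ∈ C ∧ Comp x y} := ⟨hy, h⟩
  rw [← hpair] at hy'
  simpa using hy'

lemma IsCrown.subset_of_forall_exists_comp (hC : IsCrown C) {S : Set α} (hSC : S ⊆ C)
    (hS : S.Nonempty)
    (h : ∀ x ∈ S, ∃ y₁ ∈ S, ∃ y₂ ∈ S, y₁ ≠ y₂ ∧ Comp x y₁ ∧ Comp x y₂) : C ⊆ S := by
  obtain ⟨x₀, hx₀⟩ := hS
  intro c hc
  have hpath := hC.2.2 x₀ (hSC hx₀) c hc
  clear hc
  induction hpath with
  | refl => exact hx₀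
  | tail _ hstep ih =>
    obtain ⟨y₁, hy₁, y₂, hy₂, hne, h₁, h₂⟩ := h _ ih
    rcases hC.eq_or_eq_of_comp hstep.1 (hSC hy₁) (hSC hy₂) hstep.2.1 hne h₁ h₂ hstep.2.2
      with rfl | rfl
    exacts [hy₁, hy₂]

lemma IsCrown.ncard_le_three_of_lt_of_lt (hC : IsCrown C) {x y z : α} (hx : x ∈ C)
    (hy : y ∈ C) (hz : z ∈ C) (hxy : x < y) (hyz : y < z) : C.ncard ≤ 3 := by
  have hxz := hxy.trans hyz
  have hsub : C ⊆ {x, y, z} := by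
    refine hC.subset_of_forall_exists_comp (by simp [insert_subset_iff, hx, hy, hz])
      (insert_nonempty _ _) ?_
    rintro w (rfl | rfl | rfl)
    · exact ⟨y, by simp, z, by simp, hyz.ne, comp_of_lt hxy, comp_of_lt hxz⟩
    · exact ⟨x, by simp, z, by simp, hxz.ne, (comp_of_lt hxy).symm, comp_of_lt hyz⟩
    · exact ⟨x, by simp, y, by simp, hxy.ne, (comp_of_lt hxz).symm, (comp_of_lt hyz).symm⟩
  classical
  exact (ncard_le_ncard hsub (toFinite _)).trans
    (by simpa using (ncard_coe_finset ({x, y, z} : Finset α)).trans_le Finset.card_le_three)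

lemma IsCrown.ncard_le_four_of_lt (hC : IsCrown C) {a₁ a₂ b₁ b₂ : α} (ha₁ : a₁ ∈ C)
    (ha₂ : a₂ ∈ C) (hb₁ : b₁ ∈ C) (hb₂ : b₂ ∈ C) (ha : a₁ ≠ a₂) (hb : b₁ ≠ b₂)
    (h₁₁ : a₁ < b₁) (h₁₂ : a₁ < b₂) (h₂₁ : a₂ < b₁) (h₂₂ : a₂ < b₂) : C.ncard ≤ 4 := by
  have hsub : C ⊆ {a₁, a₂, b₁, b₂} := by
    refine hC.subset_of_forall_exists_comp (by simp [insert_subset_iff, ha₁, ha₂, hb₁, hb₂])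
      (insert_nonempty _ _) ?_
    rintro w (rfl | rfl | rfl | rfl)
    · exact ⟨b₁, by simp, b₂, by simp, hb, comp_of_lt h₁₁, comp_of_lt h₁₂⟩
    · exact ⟨b₁, by simp, b₂, by simp, hb, comp_of_lt h₂₁, comp_of_lt h₂₂⟩
    · exact ⟨a₁, by simp, a₂, by simp, ha, (comp_of_lt h₁₁).symm, (comp_of_lt h₂₁).symm⟩
    · exact ⟨a₁, by simp, a₂, by simp, ha, (comp_of_lt h₁₂).symm, (comp_of_lt h₂₂).symm⟩
  classical
  exact (ncard_le_ncard hsub (toFinite _)).trans (by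
    simpa using (ncard_coe_finset ({a₁, a₂, b₁, b₂} : Finset α)).trans_le Finset.card_le_four)

lemma IsCrown.upperBounds_inter_subsingleton (hC : IsCrown C) (hcard : 4 < C.ncard)
    {s : Set α} (hsC : s ⊆ C) (hs : s.Nontrivial) : (upperBounds s ∩ C).Subsingleton := by
  obtain ⟨a₁, ha₁, a₂, ha₂, ha⟩ := hs
  rintro b₁ ⟨hb₁, hb₁C⟩ b₂ ⟨hb₂, hb₂C⟩
  by_contra hb
  have chain {a a' b : α} (ha : a ∈ C) (ha' : a' ∈ C) (hb : b ∈ C) (h : a' < a)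
      (h' : a < b) : False := by
    have := hC.ncard_le_three_of_lt_of_lt ha' ha hb h h'
    omega
  have h₁₁ := hb₁ ha₁; have h₁₂ := hb₂ ha₁; have h₂₁ := hb₁ ha₂; have h₂₂ := hb₂ ha₂
  obtain rfl | e₁₁ := eq_or_ne a₁ b₁
  · exact chain (hsC ha₁) (hsC ha₂) hb₂C (h₂₁.lt_of_ne ha.symm) (h₁₂.lt_of_ne hb)
  obtain rfl | e₁₂ := eq_or_ne a₁ b₂
  · exact chain (hsC ha₁) (hsC ha₂) hb₁C (h₂₂.lt_of_ne ha.symm) (h₁₁.lt_of_ne (Ne.symm hb))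
  obtain rfl | e₂₁ := eq_or_ne a₂ b₁
  · exact chain (hsC ha₂) (hsC ha₁) hb₂C (h₁₁.lt_of_ne ha) (h₂₂.lt_of_ne hb)
  obtain rfl | e₂₂ := eq_or_ne a₂ b₂
  · exact chain (hsC ha₂) (hsC ha₁) hb₁C (h₁₂.lt_of_ne ha) (h₂₁.lt_of_ne (Ne.symm hb))
  have := hC.ncard_le_four_of_lt (hsC ha₁) (hsC ha₂) hb₁C hb₂C ha hb (h₁₁.lt_of_ne e₁₁)
    (h₁₂.lt_of_ne e₁₂) (h₂₁.lt_of_ne e₂₁) (h₂₂.lt_of_ne e₂₂)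
  omega

end Crown

section Retract

variable {α : Type*} [PartialOrder α]

lemma exists_mem_EP_le [WellFoundedLT α] (z : α) : ∃ m ∈ EP α, m ≤ z := by
  obtain ⟨m, hmz, hm⟩ := exists_minimal_le_of_wellFoundedLT (fun _ => True) z trivial
  exact ⟨m, Or.inl (minimal_true.1 hm), hmz⟩

lemma exists_mem_EP_ge [WellFoundedGT α] (z : α) : ∃ M ∈ EP α, z ≤ M := by
  obtain ⟨M, hzM, hM⟩ := exists_maximal_ge_of_wellFoundedGT (fun _ => True) z trivial
  exact ⟨M, Or.inr (maximal_true.1 hM), hzM⟩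

theorem exists_monotone_extension {β : Type*} [PartialOrder β] {S : Set α} {C : Set β}
    (hbelow : ∀ z, ∃ m ∈ S, m ≤ z) (habove : ∀ z, ∃ M ∈ S, z ≤ M)
    (hC : ∀ s ⊆ C, s.Nontrivial → (upperBounds s ∩ C).Subsingleton)
    {f : α → β} (hf : MonotoneOn f S) (hfC : MapsTo f S C) :
    ∃ g : α → β, Monotone g ∧ EqOn g f S ∧ ∀ z, g z ∈ C := by
  classical
  set A : α → Set β := fun z => f '' (S ∩ Iic z)
  set B : α → Set β := fun z => f '' (S ∩ Ici z)
  have hA : ∀ z, (A z).Nonempty := fun z =>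
    let ⟨m, hm, hmz⟩ := hbelow z; ⟨f m, m, ⟨hm, hmz⟩, rfl⟩
  have hB : ∀ z, (B z).Nonempty := fun z =>
    let ⟨M, hM, hzM⟩ := habove z; ⟨f M, M, ⟨hM, hzM⟩, rfl⟩
  have hAC : ∀ z, A z ⊆ C := fun z => (hfC.mono_left inter_subset_left).image_subset
  have hBC : ∀ z, B z ⊆ C := fun z => (hfC.mono_left inter_subset_left).image_subset
  have hAB : ∀ z, B z ⊆ upperBounds (A z) := by
    rintro z _ ⟨M, ⟨hM, hzM⟩, rfl⟩ _ ⟨m, ⟨hm, hmz⟩, rfl⟩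
    exact hf hm hM (le_trans hmz hzM)
  have hB_sub : ∀ z, ¬(A z).Subsingleton → (B z).Subsingleton := fun z h =>
    (hC _ (hAC z) (not_subsingleton_iff.1 h)).anti (subset_inter (hAB z) (hBC z))
  let g z := if (A z).Subsingleton then (hA z).some else (hB z).some
  have hg : ∀ z, (A z).Subsingleton ∧ g z ∈ A z ∨ ¬(A z).Subsingleton ∧ g z ∈ B z := by
    intro z
    by_cases hs : (A z).Subsingleton
    · exact Or.inl ⟨hs, by simpa [g, hs] using (hA z).some_mem⟩
    · exact Or.inr ⟨hs, by simpa [g, hs] using (hB z).some_mem⟩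
  refine ⟨g, fun z z' h => ?_, fun z hz => ?_, fun z => ?_⟩
  · have hAA : A z ⊆ A z' := image_mono (inter_subset_inter_right _ (Iic_subset_Iic.2 h))
    have hBB : B z' ⊆ B z := image_mono (inter_subset_inter_right _ (Ici_subset_Ici.2 h))
    rcases hg z with ⟨hs, hgz⟩ | ⟨hs, hgz⟩ <;> rcases hg z' with ⟨hs', hgz'⟩ | ⟨hs', hgz'⟩
    · exact (hs' (hAA hgz) hgz').le
    · exact hAB z' hgz' (hAA hgz)
    · exact absurd (hs'.anti hAA) hs
    · exact (hB_sub z hs hgz (hBB hgz')).le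
  · have hfA : f z ∈ A z := ⟨z, ⟨hz, le_rfl⟩, rfl⟩
    have hfB : f z ∈ B z := ⟨z, ⟨hz, le_rfl⟩, rfl⟩
    rcases hg z with ⟨hs, hgz⟩ | ⟨hs, hgz⟩
    exacts [hs hgz hfA, hB_sub z hs hgz hfB]
  · rcases hg z with ⟨-, hgz⟩ | ⟨-, hgz⟩
    exacts [hAC z hgz, hBC z hgz]

theorem IsRetract.isRetractOfSub {S C : Set α} (h : IsRetract C) (hCS : C ⊆ S) :
    IsRetractOfSub S C := by
  obtain ⟨r, hr, hrr, rfl⟩ := h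
  refine ⟨hCS, fun z => ⟨r z, hCS (mem_range_self _)⟩, fun a b hab => hr hab,
    fun z => Subtype.ext (hrr z), ?_⟩
  ext c
  constructor
  · rintro ⟨_, ⟨z, rfl⟩, rfl⟩
    exact mem_range_self _
  · rintro ⟨z, rfl⟩
    exact ⟨_, ⟨⟨r z, hCS (mem_range_self _)⟩, rfl⟩, hrr z⟩

theorem IsRetractOfSub.isRetract {S C : Set α} (hbelow : ∀ z, ∃ m ∈ S, m ≤ z)
    (habove : ∀ z, ∃ M ∈ S, z ≤ M)
    (hC : ∀ s ⊆ C, s.Nontrivial → (upperBounds s ∩ C).Subsingleton)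
    (h : IsRetractOfSub S C) : IsRetract C := by
  classical
  obtain ⟨hCS, r, hr, hrr, hrC⟩ := h
  have hrC' : ∀ z, (r z : α) ∈ C := fun z => hrC ▸ mem_image_of_mem _ (mem_range_self z)
  have hrfix : ∀ c (hc : c ∈ C), (r ⟨c, hCS hc⟩ : α) = c := by
    intro c hc
    obtain ⟨_, ⟨z, rfl⟩, rfl⟩ := hrC ▸ hc
    rw [hrr]
  let f : α → α := fun z => if hz : z ∈ S then r ⟨z, hz⟩ else z
  have hfS : ∀ z (hz : z ∈ S), f z = r ⟨z, hz⟩ := fun z hz => dif_pos hz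
  obtain ⟨g, hg, hgf, hgC⟩ := exists_monotone_extension hbelow habove hC (f := f)
    (fun x hx y hy hxy => by rw [hfS x hx, hfS y hy]; exact hr hxy)
    (fun z hz => by rw [hfS z hz]; exact hrC' _)
  have hgfix : ∀ c ∈ C, g c = c := fun c hc => by
    rw [hgf (hCS hc), hfS c (hCS hc), hrfix c hc]
  exact ⟨g, hg, fun z => hgfix _ (hgC z),
    Subset.antisymm (range_subset_iff.2 hgC) fun c hc => ⟨c, hgfix c hc⟩⟩

end Retract

theorem stmt6_general {α : Type*} [PartialOrder α] [Fintype α]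
    (C : Set α) (hCE : C ⊆ EP α) (hC : IsCrown C) (hcard : 4 < C.ncard) :
    IsRetract C ↔ IsRetractOfSub (EP α) C :=
  ⟨fun h => h.isRetractOfSub hCE, fun h =>
    h.isRetract exists_mem_EP_le exists_mem_EP_ge fun _ => hC.upperBounds_inter_subsingleton hcard⟩

/-- a crown `C ⊆ E(P)` with more than four points is a retract
of `P` iff it is a retract of `E(P)`. -/
theorem stmt6 {α : Type*} [PartialOrder α] [Fintype α]
    (hconn : ConnectedPoset α) (htwo : ∃ x y : α, x ≠ y)
    (C : Set α) (hCE : C ⊆ EP α) (hC : IsCrown C) (hcard : 4 < C.ncard) :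
    IsRetract C ↔ IsRetractOfSub (EP α) C :=
  stmt6_general C hCE hC hcard
end

section
/- Let P be a finite connected poset with at least two points and C = {a,b,v,w} a fixed 4-crown (with minimal points a,b and maximal points v,w, not necessarily a subposet of P). There exists a surjective order homomorphism f : P → C if and only if there exist a partition L(P) = A ⊔ B into two nonempty sets and a partition U(P) = V ⊔ W into two nonempty sets such that no four-element subset F of E(P) meeting all four of A, B, V, W is an improper 4-crown in E(P). -/
/-- `{a,b,v,w}` is an improper 4-crown in `E(P)`: `a,b` are (distinct) minimal
points, `v,w` (distinct) maximal points, with `a,b < v,w`, and there is a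
point `m` with `a,b < m < v,w`. -/
def IsImproper4CrownE {α : Type*} [PartialOrder α] (a b v w : α) : Prop :=
  IsMin a ∧ IsMin b ∧ a ≠ b ∧ IsMax v ∧ IsMax w ∧ v ≠ w ∧
  a < v ∧ a < w ∧ b < v ∧ b < w ∧
  ∃ m : α, a < m ∧ b < m ∧ m < v ∧ m < w

/-!
A monotone surjection `f : P → C` splits `E(P)` by whether `f` lands in `{a, v}` or in `{b, w}`.
A point above minimal points of both classes and below maximal points of both classes would be sent
to an element of `C` lying above an element of each class and below an element of each class, and
the crown has no such element. Conversely, if no such point exists, send the points above both `A`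
and `B`, and the maximal points, to `v` or `w` according to whether they lie below `V`, and all
other points to `a` or `b` according to whether they lie above `A`. This map is monotone, and it is
onto because a connected poset with two points has no isolated points. Finally, a point lies above
`A` and `B` and below `V` and `W` exactly when it is in the inner of an improper crown meeting all
four classes.
-/

section Extremal

variable {α : Type*} [PartialOrder α]

lemma exists_isMin_le [Finite α] (x : α) : ∃ z, IsMin z ∧ z ≤ x := by
  obtain ⟨z, hzx, hz⟩ := Finite.exists_le_minimal (p := fun _ : α => True) trivial
  exact ⟨z, minimal_true.mp hz, hzx⟩

lemma exists_le_isMax [Finite α] (x : α) : ∃ z, IsMax z ∧ x ≤ z := by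
  obtain ⟨z, hxz, hz⟩ := Finite.exists_le_maximal (p := fun _ : α => True) trivial
  exact ⟨z, maximal_true.mp hz, hxz⟩

lemma ConnectedPoset.not_isMax_of_isMin [Nontrivial α] (hconn : ConnectedPoset α) {z : α}
    (hmin : IsMin z) : ¬IsMax z := by
  intro hmax
  have eq_of_reach : ∀ t, Relation.ReflTransGen (fun u v : α => u ≤ v ∨ v ≤ u) z t → t = z := by
    intro t h
    induction h with
    | refl => rfl
    | tail _ hcomp ih =>
      subst ih
      rcases hcomp with h | h
      · exact hmax.eq_of_ge h
      · exact hmin.eq_of_le h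
  obtain ⟨x, y, hxy⟩ := exists_pair_ne α
  exact hxy ((eq_of_reach x (hconn z x)).trans (eq_of_reach y (hconn z y)).symm)

lemma mem_upperClosure_or [Finite α] {A B : Set α} (hAB : {z | IsMin z} ⊆ A ∪ B) (x : α) :
    x ∈ upperClosure A ∨ x ∈ upperClosure B := by
  obtain ⟨z, hz, hzx⟩ := exists_isMin_le x
  rcases hAB hz with h | h
  exacts [.inl ⟨z, h, hzx⟩, .inr ⟨z, h, hzx⟩]

lemma mem_lowerClosure_or [Finite α] {V W : Set α} (hVW : {z | IsMax z} ⊆ V ∪ W) (x : α) :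
    x ∈ lowerClosure V ∨ x ∈ lowerClosure W := by
  obtain ⟨z, hz, hxz⟩ := exists_le_isMax x
  rcases hVW hz with h | h
  exacts [.inl ⟨z, h, hxz⟩, .inr ⟨z, h, hxz⟩]

lemma IsMin.notMem_upperClosure {p : α} {T : Set α} (hp : IsMin p) (hpT : p ∉ T) :
    p ∉ upperClosure T := fun ⟨_, hqT, hqp⟩ => hpT (hp.eq_of_le hqp ▸ hqT)

lemma IsMax.notMem_lowerClosure {p : α} {T : Set α} (hp : IsMax p) (hpT : p ∉ T) :
    p ∉ lowerClosure T := fun ⟨_, hqT, hpq⟩ => hpT (hp.eq_of_ge hpq ▸ hqT)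

lemma Monotone.exists_isMin_apply_eq [Finite α] {β : Type*} [PartialOrder β] {f : α → β}
    (hf : Monotone f) (hsurj : Function.Surjective f) {c : β} (hc : IsMin c) :
    ∃ z, IsMin z ∧ f z = c := by
  obtain ⟨x, rfl⟩ := hsurj c
  obtain ⟨z, hz, hzx⟩ := exists_isMin_le x
  exact ⟨z, hz, le_antisymm (hf hzx) (hc (hf hzx))⟩

lemma Monotone.exists_isMax_apply_eq [Finite α] {β : Type*} [PartialOrder β] {f : α → β}
    (hf : Monotone f) (hsurj : Function.Surjective f) {c : β} (hc : IsMax c) :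
    ∃ z, IsMax z ∧ f z = c := by
  obtain ⟨x, rfl⟩ := hsurj c
  obtain ⟨z, hz, hxz⟩ := exists_le_isMax x
  exact ⟨z, hz, le_antisymm (hc (hf hxz)) (hf hxz)⟩

end Extremal

namespace Is4Crown

variable {γ : Type*} [PartialOrder γ] {a b v w : γ}

lemma isMin_a (hcrown : Is4Crown a b v w) (hcarrier : ∀ z : γ, z = a ∨ z = b ∨ z = v ∨ z = w) :
    IsMin a := by
  obtain ⟨_, _, _, _, _, _, _, _⟩ := hcrown
  intro x hx
  rcases hcarrier x with rfl | rfl | rfl | rfl <;> order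

lemma isMin_b (hcrown : Is4Crown a b v w) (hcarrier : ∀ z : γ, z = a ∨ z = b ∨ z = v ∨ z = w) :
    IsMin b := by
  obtain ⟨_, _, _, _, _, _, _, _⟩ := hcrown
  intro x hx
  rcases hcarrier x with rfl | rfl | rfl | rfl <;> order

lemma isMax_v (hcrown : Is4Crown a b v w) (hcarrier : ∀ z : γ, z = a ∨ z = b ∨ z = v ∨ z = w) :
    IsMax v := by
  obtain ⟨_, _, _, _, _, _, _, _⟩ := hcrown
  intro x hx
  rcases hcarrier x with rfl | rfl | rfl | rfl <;> order

lemma isMax_w (hcrown : Is4Crown a b v w) (hcarrier : ∀ z : γ, z = a ∨ z = b ∨ z = v ∨ z = w) :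
    IsMax w := by
  obtain ⟨_, _, _, _, _, _, _, _⟩ := hcrown
  intro x hx
  rcases hcarrier x with rfl | rfl | rfl | rfl <;> order

lemma b_notMem (hcrown : Is4Crown a b v w) : b ∉ ({a, v} : Set γ) := by
  obtain ⟨_, _, _, _, _, _, _, _⟩ := hcrown
  rintro (rfl | rfl) <;> order

lemma w_notMem (hcrown : Is4Crown a b v w) : w ∉ ({a, v} : Set γ) := by
  obtain ⟨_, _, _, _, _, _, _, _⟩ := hcrown
  rintro (rfl | rfl) <;> order

lemma false_of_between_sides (hcrown : Is4Crown a b v w)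
    (hcarrier : ∀ z : γ, z = a ∨ z = b ∨ z = v ∨ z = w) {p q r s c : γ}
    (hp : p ∈ ({a, v} : Set γ)) (hq : q ∉ ({a, v} : Set γ))
    (hr : r ∈ ({a, v} : Set γ)) (hs : s ∉ ({a, v} : Set γ))
    (hpc : p ≤ c) (hqc : q ≤ c) (hcr : c ≤ r) (hcs : c ≤ s) : False := by
  rcases hcarrier c with rfl | rfl | rfl | rfl
  · exact hq (.inl ((hcrown.isMin_a hcarrier).eq_of_le hqc))
  · exact hcrown.b_notMem ((hcrown.isMin_b hcarrier).eq_of_le hpc ▸ hp)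
  · exact hs (.inr ((hcrown.isMax_v hcarrier).eq_of_ge hcs))
  · exact hcrown.w_notMem ((hcrown.isMax_w hcarrier).eq_of_ge hcr ▸ hr)

end Is4Crown

section InnerFree

variable {α : Type*} [PartialOrder α]

/-- No point lies in the inner `I_P(C')` of a crown `C'` with a vertex in each of `A, B, V, W`. -/
def InnerFree (A B V W : Set α) : Prop :=
  ∀ x, x ∈ upperClosure A → x ∈ upperClosure B → x ∈ lowerClosure V → x ∈ lowerClosure W → False

def NoImproperCrownMeeting (A B V W : Set α) : Prop :=
  ∀ F : Set α, F ⊆ EP α → F.ncard = 4 →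
    (F ∩ A).Nonempty → (F ∩ B).Nonempty → (F ∩ V).Nonempty → (F ∩ W).Nonempty →
    ¬ ∃ a' b' v' w' : α, F = {a', b', v', w'} ∧ IsImproper4CrownE a' b' v' w'

variable {A B V W : Set α}

lemma innerFree_iff_noImproperCrownMeeting (hA : A ⊆ {z | IsMin z}) (hB : B ⊆ {z | IsMin z})
    (hV : V ⊆ {z | IsMax z}) (hW : W ⊆ {z | IsMax z}) (hAB : Disjoint A B) (hVW : Disjoint V W) :
    InnerFree A B V W ↔ NoImproperCrownMeeting A B V W := by
  constructor
  · rintro hfree F - - ⟨p, hpF, hpA⟩ ⟨q, hqF, hqB⟩ ⟨r, hrF, hrV⟩ ⟨s, hsF, hsW⟩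
      ⟨a', b', v', w', rfl, -, -, -, -, -, -, ha'v', ha'w', hb'v', -, m, ha'm, hb'm, hmv', hmw'⟩
    have le_m : ∀ x ∈ ({a', b', v', w'} : Set α), IsMin x → x ≤ m := by
      rintro x (rfl | rfl | rfl | rfl) hx
      exacts [ha'm.le, hb'm.le, (hx.not_lt ha'v').elim, (hx.not_lt ha'w').elim]
    have m_le : ∀ x ∈ ({a', b', v', w'} : Set α), IsMax x → m ≤ x := by
      rintro x (rfl | rfl | rfl | rfl) hx
      exacts [(hx.not_lt ha'v').elim, (hx.not_lt hb'v').elim, hmv'.le, hmw'.le]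
    exact hfree m ⟨p, hpA, le_m p hpF (hA hpA)⟩ ⟨q, hqB, le_m q hqF (hB hqB)⟩
      ⟨r, hrV, m_le r hrF (hV hrV)⟩ ⟨s, hsW, m_le s hsF (hW hsW)⟩
  · rintro hnone x ⟨p, hpA, hpx⟩ ⟨q, hqB, hqx⟩ ⟨r, hrV, hxr⟩ ⟨s, hsW, hxs⟩
    have hpq := hAB.ne_of_mem hpA hqB
    have hrs := hVW.ne_of_mem hrV hsW
    have hpx' : p < x := hpx.lt_of_ne fun h => hpq ((hA hpA).eq_of_le (h ▸ hqx)).symm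
    have hqx' : q < x := hqx.lt_of_ne fun h => hpq ((hB hqB).eq_of_le (h ▸ hpx))
    have hxr' : x < r := hxr.lt_of_ne fun h => hrs ((hV hrV).eq_of_ge (h ▸ hxs)).symm
    have hxs' : x < s := hxs.lt_of_ne fun h => hrs ((hW hsW).eq_of_ge (h ▸ hxr))
    refine hnone {p, q, r, s} ?_ (Set.ncard_eq_four.mpr ⟨p, q, r, s, hpq,
        (hpx'.trans hxr').ne, (hpx'.trans hxs').ne, (hqx'.trans hxr').ne,
        (hqx'.trans hxs').ne, hrs, rfl⟩)
      ⟨p, by simp, hpA⟩ ⟨q, by simp, hqB⟩ ⟨r, by simp, hrV⟩ ⟨s, by simp, hsW⟩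
      ⟨p, q, r, s, rfl, hA hpA, hB hqB, hpq, hV hrV, hW hsW, hrs, hpx'.trans hxr',
        hpx'.trans hxs', hqx'.trans hxr', hqx'.trans hxs', x, hpx', hqx', hxr', hxs'⟩
    rintro z (rfl | rfl | rfl | rfl)
    exacts [.inl (hA hpA), .inl (hB hqB), .inr (hV hrV), .inr (hW hsW)]

end InnerFree

section CrownMap

variable {α γ : Type*} [PartialOrder α] {a b v w : γ}

lemma innerFree_of_monotone [PartialOrder γ] (hcrown : Is4Crown a b v w)
    (hcarrier : ∀ z : γ, z = a ∨ z = b ∨ z = v ∨ z = w) {f : α → γ} (hf : Monotone f) :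
    InnerFree ({z | IsMin z} ∩ f ⁻¹' {a, v}) ({z | IsMin z} \ f ⁻¹' {a, v})
      ({z | IsMax z} ∩ f ⁻¹' {a, v}) ({z | IsMax z} \ f ⁻¹' {a, v}) := by
  rintro x ⟨p, ⟨-, hp⟩, hpx⟩ ⟨q, ⟨-, hq⟩, hqx⟩ ⟨r, ⟨-, hr⟩, hxr⟩ ⟨s, ⟨-, hs⟩, hxs⟩
  exact hcrown.false_of_between_sides hcarrier hp hq hr hs (hf hpx) (hf hqx) (hf hxr) (hf hxs)

lemma exists_innerFree_partition [Finite α] [PartialOrder γ] (hcrown : Is4Crown a b v w)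
    (hcarrier : ∀ z : γ, z = a ∨ z = b ∨ z = v ∨ z = w) {f : α → γ} (hf : Monotone f)
    (hsurj : Function.Surjective f) :
    ∃ A B V W : Set α, A.Nonempty ∧ B.Nonempty ∧ V.Nonempty ∧ W.Nonempty ∧
      A ∪ B = {z : α | IsMin z} ∧ Disjoint A B ∧
      V ∪ W = {z : α | IsMax z} ∧ Disjoint V W ∧ InnerFree A B V W := by
  obtain ⟨za, hza, hfa⟩ := hf.exists_isMin_apply_eq hsurj (hcrown.isMin_a hcarrier)
  obtain ⟨zb, hzb, hfb⟩ := hf.exists_isMin_apply_eq hsurj (hcrown.isMin_b hcarrier)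
  obtain ⟨zv, hzv, hfv⟩ := hf.exists_isMax_apply_eq hsurj (hcrown.isMax_v hcarrier)
  obtain ⟨zw, hzw, hfw⟩ := hf.exists_isMax_apply_eq hsurj (hcrown.isMax_w hcarrier)
  refine ⟨{z | IsMin z} ∩ f ⁻¹' {a, v}, {z | IsMin z} \ f ⁻¹' {a, v},
    {z | IsMax z} ∩ f ⁻¹' {a, v}, {z | IsMax z} \ f ⁻¹' {a, v},
    ⟨za, hza, .inl hfa⟩, ⟨zb, hzb, fun h => hcrown.b_notMem (hfb ▸ h)⟩,
    ⟨zv, hzv, .inr hfv⟩, ⟨zw, hzw, fun h => hcrown.w_notMem (hfw ▸ h)⟩,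
    Set.inter_union_sdiff _ _, Set.disjoint_sdiff_inter.symm,
    Set.inter_union_sdiff _ _, Set.disjoint_sdiff_inter.symm,
    innerFree_of_monotone hcrown hcarrier hf⟩

open Classical in
noncomputable def crownMap (A B V : Set α) (a b v w : γ) (x : α) : γ :=
  if x ∈ upperClosure A ∧ x ∈ upperClosure B ∨ IsMax x then
    if x ∈ lowerClosure V then v else w
  else if x ∈ upperClosure A then a else b

variable {A B V W : Set α}

lemma monotone_crownMap [Finite α] [PartialOrder γ] (hcrown : Is4Crown a b v w)
    (hAB : {z | IsMin z} ⊆ A ∪ B) (hVW : {z | IsMax z} ⊆ V ∪ W) (hfree : InnerFree A B V W) :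
    Monotone (crownMap A B V a b v w) := by
  obtain ⟨hav, haw, hbv, hbw, -⟩ := hcrown
  intro x y hxy
  have hA : x ∈ upperClosure A → y ∈ upperClosure A := fun h => (upperClosure A).upper hxy h
  have hB : x ∈ upperClosure B → y ∈ upperClosure B := fun h => (upperClosure B).upper hxy h
  have hV : y ∈ lowerClosure V → x ∈ lowerClosure V := fun h => (lowerClosure V).lower hxy h
  have hW : y ∈ lowerClosure W → x ∈ lowerClosure W := fun h => (lowerClosure W).lower hxy h
  unfold crownMap
  by_cases hx : x ∈ upperClosure A ∧ x ∈ upperClosure B ∨ IsMax x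
  · have hy : y ∈ upperClosure A ∧ y ∈ upperClosure B ∨ IsMax y :=
      hx.imp (And.imp hA hB) fun (hmax : IsMax x) => hmax.eq_of_ge hxy ▸ hmax
    rw [if_pos hx, if_pos hy]
    by_cases hVy : y ∈ lowerClosure V
    · rw [if_pos (hV hVy), if_pos hVy]
    · have hVx : x ∉ lowerClosure V := by
        intro hVx
        rcases hx with ⟨hAx, hBx⟩ | hmax
        -- `y` is not below `V`, so it is below `W`, and then so is `x`.
        · exact hfree x hAx hBx hVx (hW ((mem_lowerClosure_or hVW y).resolve_left hVy))
        · exact hVy (hmax.eq_of_ge hxy ▸ hVx)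
      rw [if_neg hVx, if_neg hVy]
  · rw [if_neg hx]
    by_cases hy : y ∈ upperClosure A ∧ y ∈ upperClosure B ∨ IsMax y
    · rw [if_pos hy]
      split_ifs <;> apply le_of_lt <;> assumption
    · rw [if_neg hy]
      by_cases hAy : y ∈ upperClosure A
      · have hAx : x ∈ upperClosure A := by
          by_contra hAx
          exact hy (.inl ⟨hAy, hB ((mem_upperClosure_or hAB x).resolve_left hAx)⟩)
        rw [if_pos hAx, if_pos hAy]
      · rw [if_neg hAy, if_neg fun hAx => hAy (hA hAx)]

lemma surjective_crownMap (hcarrier : ∀ z : γ, z = a ∨ z = b ∨ z = v ∨ z = w)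
    (hiso : ∀ z : α, IsMin z → ¬IsMax z) (hA : A ⊆ {z | IsMin z}) (hB : B ⊆ {z | IsMin z})
    (hV : V ⊆ {z | IsMax z}) (hW : W ⊆ {z | IsMax z}) (hAB : Disjoint A B) (hVW : Disjoint V W)
    (hAne : A.Nonempty) (hBne : B.Nonempty) (hVne : V.Nonempty) (hWne : W.Nonempty) :
    Function.Surjective (crownMap A B V a b v w) := by
  intro c
  rcases hcarrier c with rfl | rfl | rfl | rfl
  · obtain ⟨p, hp⟩ := hAne
    have hpB := (hA hp).notMem_upperClosure (hAB.notMem_of_mem_left hp)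
    refine ⟨p, ?_⟩
    rw [crownMap, if_neg (not_or.mpr ⟨fun h => hpB h.2, hiso p (hA hp)⟩),
      if_pos (mem_upperClosure.2 ⟨p, hp, le_rfl⟩)]
  · obtain ⟨q, hq⟩ := hBne
    have hqA := (hB hq).notMem_upperClosure (hAB.notMem_of_mem_right hq)
    refine ⟨q, ?_⟩
    rw [crownMap, if_neg (not_or.mpr ⟨fun h => hqA h.1, hiso q (hB hq)⟩), if_neg hqA]
  · obtain ⟨r, hr⟩ := hVne
    refine ⟨r, ?_⟩
    rw [crownMap, if_pos (.inr (hV hr)), if_pos (mem_lowerClosure.2 ⟨r, hr, le_rfl⟩)]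
  · obtain ⟨s, hs⟩ := hWne
    have hsV := (hW hs).notMem_lowerClosure (hVW.notMem_of_mem_right hs)
    refine ⟨s, ?_⟩
    rw [crownMap, if_pos (.inr (hW hs)), if_neg hsV]

end CrownMap

theorem stmt7_general {α γ : Type*} [PartialOrder α] [PartialOrder γ] [Fintype α]
    (hconn : ConnectedPoset α) (htwo : ∃ x y : α, x ≠ y)
    (a b v w : γ) (hcrown : Is4Crown a b v w)
    (hcarrier : ∀ z : γ, z = a ∨ z = b ∨ z = v ∨ z = w) :
    (∃ f : α → γ, Monotone f ∧ Function.Surjective f) ↔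
    ∃ A B V W : Set α,
      A.Nonempty ∧ B.Nonempty ∧ V.Nonempty ∧ W.Nonempty ∧
      A ∪ B = {z : α | IsMin z} ∧ Disjoint A B ∧
      V ∪ W = {z : α | IsMax z} ∧ Disjoint V W ∧
      ∀ F : Set α, F ⊆ EP α → F.ncard = 4 →
        (F ∩ A).Nonempty → (F ∩ B).Nonempty → (F ∩ V).Nonempty → (F ∩ W).Nonempty →
        ¬ ∃ a' b' v' w' : α, F = {a', b', v', w'} ∧ IsImproper4CrownE a' b' v' w' := by
  constructor
  · rintro ⟨f, hf, hsurj⟩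
    obtain ⟨A, B, V, W, hAne, hBne, hVne, hWne, hAB, hABd, hVW, hVWd, hfree⟩ :=
      exists_innerFree_partition hcrown hcarrier hf hsurj
    obtain ⟨hA, hB⟩ := Set.union_subset_iff.mp hAB.le
    obtain ⟨hV, hW⟩ := Set.union_subset_iff.mp hVW.le
    exact ⟨A, B, V, W, hAne, hBne, hVne, hWne, hAB, hABd, hVW, hVWd,
      (innerFree_iff_noImproperCrownMeeting hA hB hV hW hABd hVWd).mp hfree⟩
  · rintro ⟨A, B, V, W, hAne, hBne, hVne, hWne, hAB, hABd, hVW, hVWd, hnone⟩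
    obtain ⟨hA, hB⟩ := Set.union_subset_iff.mp hAB.le
    obtain ⟨hV, hW⟩ := Set.union_subset_iff.mp hVW.le
    have hfree := (innerFree_iff_noImproperCrownMeeting hA hB hV hW hABd hVWd).mpr hnone
    have : Nontrivial α := ⟨htwo⟩
    exact ⟨crownMap A B V a b v w, monotone_crownMap hcrown hAB.ge hVW.ge hfree,
      surjective_crownMap hcarrier (fun _ => hconn.not_isMax_of_isMin) hA hB hV hW hABd hVWd
        hAne hBne hVne hWne⟩

/-- existence of a surjective homomorphism from `P` onto a fixed
4-crown `C = {a,b,v,w}` is equivalent to the existence of partitions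
`L(P) = A ⊔ B`, `U(P) = V ⊔ W` into nonempty sets such that no four-element
subset of `E(P)` meeting all of `A,B,V,W` is an improper 4-crown in `E(P)`. -/
theorem stmt7 {α γ : Type*} [PartialOrder α] [PartialOrder γ] [Fintype α] [Fintype γ]
    (hconn : ConnectedPoset α) (htwo : ∃ x y : α, x ≠ y)
    (a b v w : γ) (hcrown : Is4Crown a b v w)
    (hcarrier : ∀ z : γ, z = a ∨ z = b ∨ z = v ∨ z = w) :
    (∃ f : α → γ, Monotone f ∧ Function.Surjective f) ↔
    ∃ A B V W : Set α,
      A.Nonempty ∧ B.Nonempty ∧ V.Nonempty ∧ W.Nonempty ∧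
      A ∪ B = {z : α | IsMin z} ∧ Disjoint A B ∧
      V ∪ W = {z : α | IsMax z} ∧ Disjoint V W ∧
      ∀ F : Set α, F ⊆ EP α → F.ncard = 4 →
        (F ∩ A).Nonempty → (F ∩ B).Nonempty → (F ∩ V).Nonempty → (F ∩ W).Nonempty →
        ¬ ∃ a' b' v' w' : α, F = {a', b', v', w'} ∧ IsImproper4CrownE a' b' v' w' :=
  stmt7_general hconn htwo a b v w hcrown hcarrier
end

section
/- Let P be a finite connected poset with at least two points and C = {a,b,v,w} a 4-crown contained in E(P) (a,b minimal in P, v,w maximal in P). Then C is a retract of P if and only if there exist partitions L(P) = A ⊔ B and U(P) = V ⊔ W with a ∈ A, b ∈ B, v ∈ V, w ∈ W such that no four-element subset F of E(P) meeting all four sets A, B, V, W is an improper 4-crown in E(P). -/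
/-!
A retraction `r` onto the crown sorts the minimal points by whether `r` sends them to `b`, and the
maximal points by whether `r` sends them to `w`. If an improper crown with middle point `m` met all
four classes, its points sent to `b` and to `w` would give `b ≤ r m ≤ w`, forcing `r m ∈ {b, w}`;
but `r m = b` spreads down to its minimal point not sent to `b`, and `r m = w` up to its maximal
point not sent to `w`.

Conversely, given the partitions, send `z` to `v` or `w` when it lies above both `A` and `B`
(according to whether it lies below `V`), and to `a` or `b` otherwise (according to whether it
lies above `A`). In a finite poset every point lies above a minimal and below a maximal point, and
a point above `A` and `B` and below `V` and `W` would be the middle of an improper crown meeting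
all four classes; excluding such points is what makes the map monotone.
-/

section

variable {α : Type*} [PartialOrder α] {A B V W : Set α} {a b v w : α}

theorem isRetract_iff_exists_monotone {C : Set α} :
    IsRetract C ↔ ∃ r : α → α, Monotone r ∧ (∀ z, r z ∈ C) ∧ ∀ c ∈ C, r c = c := by
  constructor
  · rintro ⟨r, hr, hidem, rfl⟩
    exact ⟨r, hr, Set.mem_range_self, by rintro _ ⟨z, rfl⟩; exact hidem z⟩
  · rintro ⟨r, hr, hrC, hfix⟩
    exact ⟨r, hr, fun z => hfix _ (hrC z),
      (Set.range_subset_iff.2 hrC).antisymm fun c hc => ⟨c, hfix c hc⟩⟩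

theorem IsMin.mem_upperClosure_iff {x : α} {S : Set α} (hx : IsMin x) :
    x ∈ upperClosure S ↔ x ∈ S :=
  ⟨fun ⟨_, hp, hpx⟩ => hx.eq_of_le hpx ▸ hp, fun h => subset_upperClosure h⟩

theorem IsMax.mem_lowerClosure_iff {x : α} {S : Set α} (hx : IsMax x) :
    x ∈ lowerClosure S ↔ x ∈ S :=
  ⟨fun ⟨_, hp, hxp⟩ => hx.eq_of_ge hxp ▸ hp, fun h => subset_lowerClosure h⟩

theorem mem_upperClosure_of_setOf_isMin_subset [WellFoundedLT α] {S : Set α}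
    (hS : {z | IsMin z} ⊆ S) (z : α) : z ∈ upperClosure S := by
  obtain ⟨m, hmz, hm⟩ := exists_minimal_le_of_wellFoundedLT (fun _ => True) z trivial
  exact ⟨m, hS (minimal_true.1 hm), hmz⟩

theorem mem_lowerClosure_of_setOf_isMax_subset [WellFoundedGT α] {S : Set α}
    (hS : {z | IsMax z} ⊆ S) (z : α) : z ∈ lowerClosure S := by
  obtain ⟨m, hzm, hm⟩ := exists_maximal_ge_of_wellFoundedGT (fun _ => True) z trivial
  exact ⟨m, hS (maximal_true.1 hm), hzm⟩

namespace IsImproper4CrownE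

variable {p q s t : α}

theorem subset_EP (h : IsImproper4CrownE p q s t) : ({p, q, s, t} : Set α) ⊆ EP α := by
  obtain ⟨hp, hq, -, hs, ht, -⟩ := h
  rintro x (rfl | rfl | rfl | rfl)
  exacts [Or.inl hp, Or.inl hq, Or.inr hs, Or.inr ht]

theorem ncard_eq_four (h : IsImproper4CrownE p q s t) : ({p, q, s, t} : Set α).ncard = 4 := by
  obtain ⟨-, -, hpq, -, -, hst, hps, hpt, hqs, hqt, -⟩ := h
  exact Set.ncard_eq_four.2 ⟨p, q, s, t, hpq, hps.ne, hpt.ne, hqs.ne, hqt.ne, hst, rfl⟩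

theorem exists_mid (h : IsImproper4CrownE p q s t) :
    ∃ m, (∀ x ∈ ({p, q, s, t} : Set α), IsMin x → x ≤ m) ∧
      ∀ x ∈ ({p, q, s, t} : Set α), IsMax x → m ≤ x := by
  obtain ⟨-, -, -, -, -, -, hps, hpt, -, -, m, hpm, hqm, hms, hmt⟩ := h
  refine ⟨m, ?_, ?_⟩
  · rintro x (rfl | rfl | rfl | rfl) hx
    exacts [hpm.le, hqm.le, (hx.not_lt hps).elim, (hx.not_lt hpt).elim]
  · rintro x (rfl | rfl | rfl | rfl) hx
    exacts [(hx.not_lt hps).elim, (hx.not_lt (hqm.trans hms)).elim, hms.le, hmt.le]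

end IsImproper4CrownE

theorem Monotone.map_eq_or_map_eq_of_mapsTo_crown {r : α → α} (hr : Monotone r)
    (hrC : ∀ z, r z ∈ ({a, b, v, w} : Set α)) (ha : IsMin a) (hb : IsMin b) (hab : a ≠ b)
    (hv : IsMax v) (hw : IsMax w) (hvw : v ≠ w) {x y m s t : α} (hxm : x ≤ m) (hym : y ≤ m)
    (hms : m ≤ s) (hmt : m ≤ t) (hy : r y = b) (ht : r t = w) : r x = b ∨ r s = w := by
  have hbm : b ≤ r m := hy ▸ hr hym
  have hmw : r m ≤ w := ht ▸ hr hmt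
  rcases hrC m with hm | hm | hm | hm <;> rw [hm] at hbm hmw
  · exact (hab (ha.eq_of_le hbm).symm).elim
  · exact Or.inl (hb.eq_of_le (hm ▸ hr hxm))
  · exact (hvw (hv.eq_of_le hmw)).elim
  · exact Or.inr (hw.eq_of_ge (hm ▸ hr hms))

theorem exists_isImproper4CrownE_of_mem_closures
    (hA : A ⊆ {z | IsMin z}) (hB : B ⊆ {z | IsMin z}) (hAB : Disjoint A B)
    (hV : V ⊆ {z | IsMax z}) (hW : W ⊆ {z | IsMax z}) (hVW : Disjoint V W) {z : α}
    (hzA : z ∈ upperClosure A) (hzB : z ∈ upperClosure B)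
    (hzV : z ∈ lowerClosure V) (hzW : z ∈ lowerClosure W) :
    ∃ p ∈ A, ∃ q ∈ B, ∃ s ∈ V, ∃ t ∈ W, IsImproper4CrownE p q s t := by
  obtain ⟨p, hpA, hpz⟩ := hzA
  obtain ⟨q, hqB, hqz⟩ := hzB
  obtain ⟨s, hsV, hzs⟩ := hzV
  obtain ⟨t, htW, hzt⟩ := hzW
  have hzmin : ¬ IsMin z := fun hz =>
    hAB.ne_of_mem ((hz.eq_of_le hpz) ▸ hpA) ((hz.eq_of_le hqz) ▸ hqB) rfl
  have hzmax : ¬ IsMax z := fun hz =>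
    hVW.ne_of_mem ((hz.eq_of_ge hzs) ▸ hsV) ((hz.eq_of_ge hzt) ▸ htW) rfl
  have hpz' : p < z := hpz.lt_of_ne fun h => hzmin (h ▸ hA hpA)
  have hqz' : q < z := hqz.lt_of_ne fun h => hzmin (h ▸ hB hqB)
  have hzs' : z < s := hzs.lt_of_ne fun h => hzmax (h ▸ hV hsV)
  have hzt' : z < t := hzt.lt_of_ne fun h => hzmax (h ▸ hW htW)
  exact ⟨p, hpA, q, hqB, s, hsV, t, htW, hA hpA, hB hqB, hAB.ne_of_mem hpA hqB, hV hsV, hW htW,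
    hVW.ne_of_mem hsV htW, hpz'.trans hzs', hpz'.trans hzt', hqz'.trans hzs', hqz'.trans hzt',
    z, hpz', hqz', hzs', hzt'⟩

open Classical in
noncomputable def crownRetraction (A B V : Set α) (a b v w : α) (z : α) : α :=
  if z ∈ upperClosure A ∧ z ∈ upperClosure B then
    if z ∈ lowerClosure V then v else w
  else if z ∈ upperClosure A then a else b

theorem crownRetraction_mem (z : α) :
    crownRetraction A B V a b v w z ∈ ({a, b, v, w} : Set α) := by
  unfold crownRetraction
  split_ifs <;> simp

theorem crownRetraction_monotone (hav : a ≤ v) (haw : a ≤ w) (hbv : b ≤ v) (hbw : b ≤ w)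
    (hAB : ∀ z, z ∈ upperClosure A ∨ z ∈ upperClosure B)
    (hVW : ∀ z, z ∈ lowerClosure V ∨ z ∈ lowerClosure W)
    (hexcl : ∀ z ∈ upperClosure A, z ∈ upperClosure B → z ∈ lowerClosure V →
      z ∉ lowerClosure W) :
    Monotone (crownRetraction A B V a b v w) := by
  intro z z' hzz'
  have hA : z ∈ upperClosure A → z' ∈ upperClosure A := fun h => (upperClosure A).upper hzz' h
  have hB : z ∈ upperClosure B → z' ∈ upperClosure B := fun h => (upperClosure B).upper hzz' h
  have hV : z' ∈ lowerClosure V → z ∈ lowerClosure V := fun h => (lowerClosure V).lower hzz' h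
  have hW : z' ∈ lowerClosure W → z ∈ lowerClosure W := fun h => (lowerClosure W).lower hzz' h
  by_cases hz : z ∈ upperClosure A ∧ z ∈ upperClosure B
  · have hz' : z' ∈ upperClosure A ∧ z' ∈ upperClosure B := ⟨hA hz.1, hB hz.2⟩
    by_cases hz'V : z' ∈ lowerClosure V
    · simp [crownRetraction, hz, hz', hz'V, hV hz'V]
    · have hzV : z ∉ lowerClosure V := fun h =>
        hexcl z hz.1 hz.2 h (hW ((hVW z').resolve_left hz'V))
      simp [crownRetraction, hz, hz', hz'V, hzV]
  by_cases hz' : z' ∈ upperClosure A ∧ z' ∈ upperClosure B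
  · rw [crownRetraction, crownRetraction, if_neg hz, if_pos hz']
    split_ifs <;> assumption
  by_cases hzA : z ∈ upperClosure A
  · simp only [crownRetraction, if_neg hz, if_neg hz', if_pos hzA, if_pos (hA hzA), le_rfl]
  · have hz'A : z' ∉ upperClosure A := fun h => hz' ⟨h, hB ((hAB z).resolve_left hzA)⟩
    simp only [crownRetraction, if_neg hz, if_neg hz', if_neg hzA, if_neg hz'A, le_rfl]

theorem isRetract_crown_of_partition [WellFoundedLT α] [WellFoundedGT α]
    (ha : IsMin a) (hb : IsMin b) (hw : IsMax w)
    (hav : a ≤ v) (haw : a ≤ w) (hbv : b ≤ v) (hbw : b ≤ w)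
    (haA : a ∈ A) (hbB : b ∈ B) (hvV : v ∈ V) (hwW : w ∈ W)
    (hmin : {z | IsMin z} ⊆ A ∪ B) (hAB : Disjoint A B)
    (hmax : {z | IsMax z} ⊆ V ∪ W) (hVW : Disjoint V W)
    (hexcl : ∀ z ∈ upperClosure A, z ∈ upperClosure B → z ∈ lowerClosure V →
      z ∉ lowerClosure W) :
    IsRetract ({a, b, v, w} : Set α) := by
  have hAB' : ∀ z, z ∈ upperClosure A ∨ z ∈ upperClosure B := fun z => by
    simpa [upperClosure_union] using mem_upperClosure_of_setOf_isMin_subset hmin z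
  have hVW' : ∀ z, z ∈ lowerClosure V ∨ z ∈ lowerClosure W := fun z => by
    simpa [lowerClosure_union] using mem_lowerClosure_of_setOf_isMax_subset hmax z
  have haB : a ∉ upperClosure B := fun h => hAB.ne_of_mem haA (ha.mem_upperClosure_iff.1 h) rfl
  have hbA : b ∉ upperClosure A := fun h => hAB.ne_of_mem (hb.mem_upperClosure_iff.1 h) hbB rfl
  have hwV : w ∉ lowerClosure V := fun h => hVW.ne_of_mem (hw.mem_lowerClosure_iff.1 h) hwW rfl
  have hvAB : v ∈ upperClosure A ∧ v ∈ upperClosure B := ⟨⟨a, haA, hav⟩, ⟨b, hbB, hbv⟩⟩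
  have hwAB : w ∈ upperClosure A ∧ w ∈ upperClosure B := ⟨⟨a, haA, haw⟩, ⟨b, hbB, hbw⟩⟩
  refine isRetract_iff_exists_monotone.2 ⟨crownRetraction A B V a b v w,
    crownRetraction_monotone hav haw hbv hbw hAB' hVW' hexcl, crownRetraction_mem, ?_⟩
  rintro c (rfl | rfl | rfl | rfl) <;> rw [crownRetraction]
  · rw [if_neg fun h => haB h.2, if_pos (show _ ∈ upperClosure A from subset_upperClosure haA)]
  · rw [if_neg fun h => hbA h.1, if_neg hbA]
  · rw [if_pos hvAB, if_pos (show _ ∈ lowerClosure V from subset_lowerClosure hvV)]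
  · rw [if_pos hwAB, if_neg hwV]

end

theorem stmt8_general {α : Type*} [PartialOrder α] [Fintype α]
    (a b v w : α)
    (ha : IsMin a) (hb : IsMin b) (hab : a ≠ b)
    (hv : IsMax v) (hw : IsMax w) (hvw : v ≠ w)
    (hav : a < v) (haw : a < w) (hbv : b < v) (hbw : b < w) :
    IsRetract ({a, b, v, w} : Set α) ↔
    ∃ A B V W : Set α,
      a ∈ A ∧ b ∈ B ∧ v ∈ V ∧ w ∈ W ∧
      A ∪ B = {z : α | IsMin z} ∧ Disjoint A B ∧
      V ∪ W = {z : α | IsMax z} ∧ Disjoint V W ∧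
      ∀ F : Set α, F ⊆ EP α → F.ncard = 4 →
        (F ∩ A).Nonempty → (F ∩ B).Nonempty → (F ∩ V).Nonempty → (F ∩ W).Nonempty →
        ¬ ∃ a' b' v' w' : α, F = {a', b', v', w'} ∧ IsImproper4CrownE a' b' v' w' := by
  constructor
  · intro hC
    obtain ⟨r, hr, hrC, hfix⟩ := isRetract_iff_exists_monotone.1 hC
    refine ⟨{z | IsMin z} \ r ⁻¹' {b}, {z | IsMin z} ∩ r ⁻¹' {b},
      {z | IsMax z} \ r ⁻¹' {w}, {z | IsMax z} ∩ r ⁻¹' {w},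
      ⟨ha, (hfix a (by simp)).trans_ne hab⟩, ⟨hb, hfix b (by simp)⟩,
      ⟨hv, (hfix v (by simp)).trans_ne hvw⟩, ⟨hw, hfix w (by simp)⟩,
      Set.sdiff_union_inter _ _, Set.disjoint_sdiff_inter,
      Set.sdiff_union_inter _ _, Set.disjoint_sdiff_inter, ?_⟩
    rintro F - - ⟨x, hxF, hx, hxb⟩ ⟨y, hyF, hy, hyb⟩ ⟨s, hsF, hs, hsw⟩ ⟨t, htF, ht, htw⟩
      ⟨p, q, s', t', rfl, hcrown⟩
    obtain ⟨m, hle, hge⟩ := hcrown.exists_mid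
    exact (hr.map_eq_or_map_eq_of_mapsTo_crown hrC ha hb hab hv hw hvw (hle x hxF hx)
      (hle y hyF hy) (hge s hsF hs) (hge t htF ht) hyb htw).elim hxb hsw
  · rintro ⟨A, B, V, W, haA, hbB, hvV, hwW, hABu, hAB, hVWu, hVW, hF⟩
    refine isRetract_crown_of_partition ha hb hw hav.le haw.le hbv.le hbw.le haA hbB hvV hwW
      hABu.ge hAB hVWu.ge hVW fun z hzA hzB hzV hzW => ?_
    obtain ⟨p, hpA, q, hqB, s, hsV, t, htW, hcrown⟩ := exists_isImproper4CrownE_of_mem_closures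
      (hABu ▸ Set.subset_union_left) (hABu ▸ Set.subset_union_right) hAB
      (hVWu ▸ Set.subset_union_left) (hVWu ▸ Set.subset_union_right) hVW hzA hzB hzV hzW
    exact hF _ hcrown.subset_EP hcrown.ncard_eq_four ⟨p, by simp, hpA⟩ ⟨q, by simp, hqB⟩
      ⟨s, by simp, hsV⟩ ⟨t, by simp, htW⟩ ⟨p, q, s, t, rfl, hcrown⟩

/-- a 4-crown `C = {a,b,v,w} ⊆ E(P)` is a retract of `P` iff
there are partitions `L(P) = A ⊔ B`, `U(P) = V ⊔ W` with `a ∈ A`, `b ∈ B`,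
`v ∈ V`, `w ∈ W` such that no four-element subset of `E(P)` meeting all of
`A,B,V,W` is an improper 4-crown in `E(P)`. -/
theorem stmt8 {α : Type*} [PartialOrder α] [Fintype α]
    (hconn : ConnectedPoset α) (htwo : ∃ x y : α, x ≠ y)
    (a b v w : α)
    (ha : IsMin a) (hb : IsMin b) (hab : a ≠ b)
    (hv : IsMax v) (hw : IsMax w) (hvw : v ≠ w)
    (hav : a < v) (haw : a < w) (hbv : b < v) (hbw : b < w) :
    IsRetract ({a, b, v, w} : Set α) ↔
    ∃ A B V W : Set α,
      a ∈ A ∧ b ∈ B ∧ v ∈ V ∧ w ∈ W ∧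
      A ∪ B = {z : α | IsMin z} ∧ Disjoint A B ∧
      V ∪ W = {z : α | IsMax z} ∧ Disjoint V W ∧
      ∀ F : Set α, F ⊆ EP α → F.ncard = 4 →
        (F ∩ A).Nonempty → (F ∩ B).Nonempty → (F ∩ V).Nonempty → (F ∩ W).Nonempty →
        ¬ ∃ a' b' v' w' : α, F = {a', b', v', w'} ∧ IsImproper4CrownE a' b' v' w' :=
  stmt8_general a b v w ha hb hab hv hw hvw hav haw hbv hbw
end

section
/- Let P be a finite connected poset of height two containing a 4-crown {a,b,v,w} ⊆ E(P) whose inner is nonempty but which is not an hourglass-crown (no single x ∈ I_P(C) satisfies I_P(C) ⊆ ↓x ∪ ↑x). Then P does not have the fixed point property. -/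
/-- A poset has height two: there is a 3-element chain but no 4-element chain. -/
def HeightTwo (α : Type*) [PartialOrder α] : Prop :=
  (∃ a b c : α, a < b ∧ b < c) ∧ ¬ ∃ a b c d : α, a < b ∧ b < c ∧ c < d

/-- A 4-crown in `E(P)`. -/
def Is4CrownE {α : Type*} [PartialOrder α] (a b v w : α) : Prop :=
  IsMin a ∧ IsMin b ∧ a ≠ b ∧ IsMax v ∧ IsMax w ∧ v ≠ w ∧
  a < v ∧ a < w ∧ b < v ∧ b < w

/-- The inner of the 4-crown `{a,b,v,w}`. -/
def CrownInner {α : Type*} [PartialOrder α] (a b v w : α) : Set α :=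
  {m | a ≤ m ∧ b ≤ m ∧ m ≤ v ∧ m ≤ w}

/-!
Sort the points into three levels: minimal points, maximal (non-minimal) points, and the rest.
Send each level into a two-element set, minimal points into `{a, b}`, middle points into two
incomparable points `m, n` of the inner, maximal points into `{v, w}`, choosing in each level the
element different from the argument. In a poset without 4-chains any strict comparability climbs
from a lower level to a higher one, and the three targets are ordered `{a, b} ≤ {m, n} ≤ {v, w}`,
so the map is monotone; it has no fixed point by construction.
-/

open Classical in
noncomputable def avoid {α : Type*} (p q x : α) : α := if x = p then q else p

lemma avoid_ne_self {α : Type*} {p q : α} (h : p ≠ q) (x : α) : avoid p q x ≠ x := by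
  unfold avoid
  split_ifs with hx
  · exact hx ▸ h.symm
  · exact Ne.symm hx

section

variable {α : Type*} [PartialOrder α]

lemma avoid_le_avoid {p q r s : α} (hpr : p ≤ r) (hps : p ≤ s) (hqr : q ≤ r) (hqs : q ≤ s)
    (x y : α) : avoid p q x ≤ avoid r s y := by
  unfold avoid
  split_ifs <;> assumption

open Classical in
noncomputable def stratifiedMap (lo mid hi : α → α) (x : α) : α :=
  if IsMin x then lo x else if IsMax x then hi x else mid x

lemma stratifiedMap_ne_self {lo mid hi : α → α} (hlo : ∀ x, lo x ≠ x) (hmid : ∀ x, mid x ≠ x)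
    (hhi : ∀ x, hi x ≠ x) (x : α) : stratifiedMap lo mid hi x ≠ x := by
  unfold stratifiedMap
  split_ifs
  exacts [hlo x, hhi x, hmid x]

lemma stratifiedMap_monotone (h4 : ¬ ∃ a b c d : α, a < b ∧ b < c ∧ c < d) {lo mid hi : α → α}
    (hlm : ∀ x y, lo x ≤ mid y) (hmh : ∀ x y, mid x ≤ hi y) (hlh : ∀ x y, lo x ≤ hi y) :
    Monotone (stratifiedMap lo mid hi) := by
  intro x y hxy
  rcases hxy.eq_or_lt with rfl | hlt
  · rfl
  have hy : ¬ IsMin y := not_isMin_of_lt hlt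
  have hx : ¬ IsMax x := not_isMax_of_lt hlt
  unfold stratifiedMap
  by_cases hxmin : IsMin x
  · by_cases hymax : IsMax y <;> simp [hxmin, hy, hymax, hlh, hlm]
  · have hymax : IsMax y := by
      by_contra hymax
      obtain ⟨u, hu⟩ := not_isMin_iff.mp hxmin
      obtain ⟨t, ht⟩ := not_isMax_iff.mp hymax
      exact h4 ⟨u, x, y, t, hu, hlt, ht⟩
    simp [hxmin, hx, hy, hymax, hmh]

theorem exists_monotone_forall_ne_self_of_mem_crownInner
    (h4 : ¬ ∃ a b c d : α, a < b ∧ b < c ∧ c < d) {a b v w m n : α}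
    (hab : a ≠ b) (hvw : v ≠ w) (hmn : m ≠ n)
    (hm : m ∈ CrownInner a b v w) (hn : n ∈ CrownInner a b v w) :
    ∃ f : α → α, Monotone f ∧ ∀ x, f x ≠ x := by
  obtain ⟨ham, hbm, hmv, hmw⟩ := hm
  obtain ⟨han, hbn, hnv, hnw⟩ := hn
  refine ⟨stratifiedMap (avoid a b) (avoid n m) (avoid w v), ?_, ?_⟩
  · exact stratifiedMap_monotone h4 (avoid_le_avoid han ham hbn hbm)
      (avoid_le_avoid hnw hnv hmw hmv)
      (avoid_le_avoid (ham.trans hmw) (ham.trans hmv) (hbm.trans hmw) (hbm.trans hmv))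
  · exact stratifiedMap_ne_self (avoid_ne_self hab) (avoid_ne_self hmn.symm)
      (avoid_ne_self hvw.symm)

end

theorem stmt16_general {α : Type*} [PartialOrder α] (hht : HeightTwo α)
    (a b v w : α) (hcrown : Is4CrownE a b v w)
    (hne : (CrownInner a b v w).Nonempty)
    (hnothg : ¬ ∃ m ∈ CrownInner a b v w, ∀ u ∈ CrownInner a b v w, u ≤ m ∨ m ≤ u) :
    ¬ ∀ f : α → α, Monotone f → ∃ z, f z = z := by
  intro hfpp
  obtain ⟨n, hn⟩ := hne
  obtain ⟨m, hm, hmn, -⟩ : ∃ m ∈ CrownInner a b v w, ¬ m ≤ n ∧ ¬ n ≤ m := by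
    push Not at hnothg
    exact hnothg n hn
  obtain ⟨-, -, hab, -, -, hvw, -⟩ := hcrown
  obtain ⟨f, hf, hfix⟩ := exists_monotone_forall_ne_self_of_mem_crownInner hht.2 hab hvw
    (fun h => hmn h.le) hm hn
  obtain ⟨z, hz⟩ := hfpp f hf
  exact hfix z hz

/-- a finite connected poset of height two containing a 4-crown
in `E(P)` with nonempty inner which is not an hourglass-crown does not have
the fixed point property. -/
theorem stmt16 {α : Type*} [PartialOrder α] [Fintype α]
    (hconn : ConnectedPoset α) (hht : HeightTwo α)
    (a b v w : α) (hcrown : Is4CrownE a b v w)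
    (hne : (CrownInner a b v w).Nonempty)
    (hnothg : ¬ ∃ m ∈ CrownInner a b v w, ∀ u ∈ CrownInner a b v w, u ≤ m ∨ m ≤ u) :
    ¬ ∀ f : α → α, Monotone f → ∃ z, f z = z :=
  stmt16_general hht a b v w hcrown hne hnothg
end

section
/- Let P be a finite connected poset and let the edge (x,y), x <_P y with x minimal and y maximal in P, not belong to any improper 4-crown of P. Then every non-extremal point m of the interval [x,y]_P satisfies: either the set of minimal points of P below m is the singleton {x}, or the set of maximal points of P above m is the singleton {y}. -/
section

variable {α : Type*} [PartialOrder α] {a b m v w : α}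

theorem IsMin.lt_of_le_of_not_isMin (ha : IsMin a) (h : a ≤ b) (hb : ¬IsMin b) : a < b :=
  h.lt_of_ne fun hab => hb (hab ▸ ha)

theorem IsMax.lt_of_le_of_not_isMax (hb : IsMax b) (h : a ≤ b) (ha : ¬IsMax a) : a < b :=
  h.lt_of_ne fun hab => ha (hab ▸ hb)

theorem isImproper4CrownE_of_lt_of_lt (ha : IsMin a) (hb : IsMin b) (hab : a ≠ b)
    (hv : IsMax v) (hw : IsMax w) (hvw : v ≠ w)
    (ham : a < m) (hbm : b < m) (hmv : m < v) (hmw : m < w) :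
    IsImproper4CrownE a b v w :=
  ⟨ha, hb, hab, hv, hw, hvw, ham.trans hmv, ham.trans hmw, hbm.trans hmv, hbm.trans hmw,
    m, ham, hbm, hmv, hmw⟩

end

theorem stmt19_general {α : Type*} [PartialOrder α]
    (x y : α) (hx : IsMin x) (hy : IsMax y)
    (hedge : ¬ ∃ a b v w : α, IsImproper4CrownE a b v w ∧
      (x = a ∨ x = b) ∧ (y = v ∨ y = w)) :
    ∀ m : α, x ≤ m → m ≤ y → ¬ IsMin m → ¬ IsMax m →
      ({l : α | IsMin l ∧ l ≤ m} = {x}) ∨ ({u : α | IsMax u ∧ m ≤ u} = {y}) := by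
  intro m hxm hmy hmin hmax
  by_contra! ⟨hbelow, habove⟩
  obtain ⟨l, ⟨hl, hlm⟩, hlx⟩ := ((Set.nontrivial_iff_ne_singleton
    (show x ∈ {l | IsMin l ∧ l ≤ m} from ⟨hx, hxm⟩)).2 hbelow).exists_ne x
  obtain ⟨u, ⟨hu, hmu⟩, huy⟩ := ((Set.nontrivial_iff_ne_singleton
    (show y ∈ {u | IsMax u ∧ m ≤ u} from ⟨hy, hmy⟩)).2 habove).exists_ne y
  exact hedge ⟨x, l, y, u,
    isImproper4CrownE_of_lt_of_lt hx hl hlx.symm hy hu huy.symm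
      (hx.lt_of_le_of_not_isMin hxm hmin) (hl.lt_of_le_of_not_isMin hlm hmin)
      (hy.lt_of_le_of_not_isMax hmy hmax) (hu.lt_of_le_of_not_isMax hmu hmax),
    .inl rfl, .inl rfl⟩

/-- if the edge `(x,y)` with `x` minimal, `y` maximal does not
belong to any improper 4-crown of `P`, then every non-extremal point `m` of
`[x,y]_P` satisfies: the minimal points below `m` form exactly `{x}`, or the
maximal points above `m` form exactly `{y}`. -/
theorem stmt19 {α : Type*} [PartialOrder α] [Fintype α]
    (hconn : ConnectedPoset α)
    (x y : α) (hx : IsMin x) (hy : IsMax y) (hxy : x < y)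
    (hedge : ¬ ∃ a b v w : α, IsImproper4CrownE a b v w ∧
      (x = a ∨ x = b) ∧ (y = v ∨ y = w)) :
    ∀ m : α, x ≤ m → m ≤ y → ¬ IsMin m → ¬ IsMax m →
      ({l : α | IsMin l ∧ l ≤ m} = {x}) ∨ ({u : α | IsMax u ∧ m ≤ u} = {y}) :=
  stmt19_general x y hx hy hedge
end
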